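/- For any complex numbers a, b (values u(x), u(y)), any unimodular complex number e (of the form e^{iθ}), any positive reals p, q (values u_δ(x), u_δ(y)) with p ≥ |a| and q ≥ |b|, and any nonnegative reals φ₁, φ₂, the real part of (a − b·e)·(conj(a)/p · φ₁ − conj(b)/q · φ₂ · conj(e)) is at least |a|²/p · φ₁ + |b|²/q · φ₂ − |a|·|b|/q · φ₂ − |b|·|a|/p · φ₁. -/

import Mathlib

/-!
Expanding the product, the real part equals `‖a‖² s + ‖b‖² t - Re(a b̄ ē) (s + t)` with
`s = φ₁ / p`, `t = φ₂ / q`, where the two cross terms are complex conjugates of each other and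
`|e| = 1` makes the `‖b‖²` term exact. Since `s, t ≥ 0` and `Re(a b̄ ē) ≤ ‖a‖ ‖b‖`,
the bound follows.
-/

open ComplexConjugate

namespace Complex

theorem re_sub_mul_mul_conj_sub_conj_mul_conj (a b e : ℂ) (he : ‖e‖ = 1) (s t : ℝ) :
    ((a - b * e) * (conj a * s - conj b * t * conj e)).re
      = ‖a‖ ^ 2 * s + ‖b‖ ^ 2 * t - (a * conj b * conj e).re * (s + t) := by
  have hee : e * conj e = 1 := by
    rw [mul_conj, normSq_eq_norm_sq, he, one_pow, ofReal_one]
  have hexpand : (a - b * e) * (conj a * s - conj b * t * conj e)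
      = (a * conj a) * s + (b * conj b) * t - conj (a * conj b * conj e) * s
          - (a * conj b * conj e) * t := by
    simp only [map_mul, conj_conj]
    linear_combination (b * conj b * t) * hee
  rw [hexpand, mul_conj, mul_conj, normSq_eq_norm_sq, normSq_eq_norm_sq]
  simp only [sub_re, add_re, mul_re, ofReal_re, ofReal_im, conj_re]
  ring

theorem re_mul_conj_mul_conj_le (a b e : ℂ) (he : ‖e‖ = 1) :
    (a * conj b * conj e).re ≤ ‖a‖ * ‖b‖ :=
  (re_le_norm _).trans_eq (by rw [norm_mul, norm_mul, norm_conj, norm_conj, he, mul_one])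

theorem le_re_sub_mul_mul_conj_sub_conj_mul_conj (a b e : ℂ) (he : ‖e‖ = 1) {s t : ℝ}
    (hs : 0 ≤ s) (ht : 0 ≤ t) :
    ‖a‖ ^ 2 * s + ‖b‖ ^ 2 * t - ‖a‖ * ‖b‖ * (s + t)
      ≤ ((a - b * e) * (conj a * s - conj b * t * conj e)).re := by
  rw [re_sub_mul_mul_conj_sub_conj_mul_conj a b e he]
  gcongr
  exact re_mul_conj_mul_conj_le a b e he

end Complex

theorem stmt_4_general (a b e : ℂ) (he : ‖e‖ = 1) (p q φ₁ φ₂ : ℝ)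
    (hp : 0 < p) (hq : 0 < q)
    (hφ₁ : 0 ≤ φ₁) (hφ₂ : 0 ≤ φ₂) :
    ‖a‖ ^ 2 / p * φ₁ + ‖b‖ ^ 2 / q * φ₂
        - ‖a‖ * ‖b‖ / q * φ₂
        - ‖b‖ * ‖a‖ / p * φ₁ ≤
      ((a - b * e) *
        ((starRingEnd ℂ) a / (p : ℂ) * (φ₁ : ℂ)
          - (starRingEnd ℂ) b / (q : ℂ) * (φ₂ : ℂ) * (starRingEnd ℂ) e)).re := by
  have key := Complex.le_re_sub_mul_mul_conj_sub_conj_mul_conj a b e he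
    (div_nonneg hφ₁ hp.le) (div_nonneg hφ₂ hq.le)
  convert key using 1
  · ring
  · push_cast
    congr 1
    ring

theorem stmt_4 (a b e : ℂ) (he : ‖e‖ = 1) (p q φ₁ φ₂ : ℝ)
    (hp : 0 < p) (hq : 0 < q) (hpa : ‖a‖ ≤ p) (hqb : ‖b‖ ≤ q)
    (hφ₁ : 0 ≤ φ₁) (hφ₂ : 0 ≤ φ₂) :
    ‖a‖ ^ 2 / p * φ₁ + ‖b‖ ^ 2 / q * φ₂
        - ‖a‖ * ‖b‖ / q * φ₂
        - ‖b‖ * ‖a‖ / p * φ₁ ≤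
      ((a - b * e) *
        ((starRingEnd ℂ) a / (p : ℂ) * (φ₁ : ℂ)
          - (starRingEnd ℂ) b / (q : ℂ) * (φ₂ : ℂ) * (starRingEnd ℂ) e)).re :=
  stmt_4_general a b e he p q φ₁ φ₂ hp hq hφ₁ hφ₂
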